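/- (Remark) With the particular weights w₁ = w₂ = (N−1)/(2(2N−1)) and w₃ = N/(2N−1), the corrected estimator Ṽ coincides identically with the Sun et al. estimator W with K = N groups of inner-level sample size n_k = 2: for all real numbers a₁, …, a_N and b₁, …, b_N, Ṽ = (SS_τ − ((N−1)/N)·SS_ε)/(2N − 2). -/

import Mathlib

/-!
Both estimators are rational functions of `N` and the five power sums `∑ aₙ`, `∑ bₙ`, `∑ aₙ²`,
`∑ bₙ²`, `∑ aₙ bₙ`: the sample variances through `∑ (xₙ - x̄)² = ∑ xₙ² - (∑ xₙ)² / N`, and the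
ANOVA sums of squares through `SS_ε = (∑ aₙ² + ∑ bₙ²)/2 - ∑ aₙ bₙ` and
`SS_τ = (∑ aₙ² + ∑ bₙ²)/2 + ∑ aₙ bₙ - (∑ aₙ + ∑ bₙ)² / (2N)`. With the chosen weights the prefactor
`N / (N - w₃)` is `(2N - 1)/(2N - 2)`, and the two rational functions coincide.
-/

open Finset

theorem Finset.sum_sq_sub_mean {ι K : Type*} [Field K] (s : Finset ι) (x : ι → K) :
    ∑ i ∈ s, (x i - (#s : K)⁻¹ * ∑ j ∈ s, x j) ^ 2
      = ∑ i ∈ s, x i ^ 2 - (#s : K)⁻¹ * (∑ i ∈ s, x i) ^ 2 := by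
  have hcard : (#s : K) * (#s : K)⁻¹ ^ 2 = (#s : K)⁻¹ := by
    by_cases h : (#s : K) = 0 <;> simp [h]; field_simp
  simp only [sub_sq, sum_add_distrib, sum_sub_distrib, mul_pow, sum_const, nsmul_eq_mul,
    ← sum_mul, ← mul_sum]
  linear_combination (∑ j ∈ s, x j) ^ 2 * hcard

section PairedAnova

variable {ι K : Type*} [Field K] [CharZero K] (s : Finset ι) (a b : ι → K)

theorem sum_sq_sub_pair_mean :
    ∑ k ∈ s, ((a k - (a k + b k) / 2) ^ 2 + (b k - (a k + b k) / 2) ^ 2)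
      = (∑ k ∈ s, a k ^ 2 + ∑ k ∈ s, b k ^ 2) / 2 - ∑ k ∈ s, a k * b k := by
  have hpair : ∀ k, (a k - (a k + b k) / 2) ^ 2 + (b k - (a k + b k) / 2) ^ 2
      = (a k ^ 2 + b k ^ 2) / 2 - a k * b k := fun k => by ring
  simp only [hpair, sum_sub_distrib, ← sum_div, sum_add_distrib]

theorem sum_two_mul_sq_pair_mean_sub_grand_mean :
    ∑ k ∈ s, 2 * ((a k + b k) / 2 - (2 * (#s : K))⁻¹ * ∑ j ∈ s, (a j + b j)) ^ 2
      = (∑ k ∈ s, a k ^ 2 + ∑ k ∈ s, b k ^ 2) / 2 + ∑ k ∈ s, a k * b k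
        - (#s : K)⁻¹ * (∑ k ∈ s, a k + ∑ k ∈ s, b k) ^ 2 / 2 := by
  have hgrand : (2 * (#s : K))⁻¹ * ∑ j ∈ s, (a j + b j)
      = (#s : K)⁻¹ * ∑ j ∈ s, (a j + b j) / 2 := by
    rw [← sum_div, mul_inv]; ring
  have hsq : ∀ k, ((a k + b k) / 2) ^ 2 = (a k ^ 2 + b k ^ 2) / 4 + a k * b k / 2 :=
    fun k => by ring
  rw [← mul_sum, hgrand, sum_sq_sub_mean, ← sum_div, sum_add_distrib]
  simp only [hsq, sum_add_distrib, ← sum_div]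
  ring

end PairedAnova

theorem corrected_estimator_eq_sun_et_al
    (N : ℕ) (hN : 2 ≤ N) (a b : Fin N → ℝ)
    (μhat μhat' s2 s2' w₁ w₂ w₃ V Vtilde : ℝ)
    (fbar : Fin N → ℝ) (fgrand SSτ SSε : ℝ)
    (hμhat : μhat = (N : ℝ)⁻¹ * ∑ n, a n)
    (hμhat' : μhat' = (N : ℝ)⁻¹ * ∑ n, b n)
    (hs2 : s2 = ((N : ℝ) - 1)⁻¹ * ∑ n, (a n - μhat) ^ 2)
    (hs2' : s2' = ((N : ℝ) - 1)⁻¹ * ∑ n, (b n - μhat') ^ 2)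
    (hw₁ : w₁ = ((N : ℝ) - 1) / (2 * (2 * (N : ℝ) - 1)))
    (hw₂ : w₂ = ((N : ℝ) - 1) / (2 * (2 * (N : ℝ) - 1)))
    (hw₃ : w₃ = (N : ℝ) / (2 * (N : ℝ) - 1))
    (hV : V = (N : ℝ)⁻¹ * ∑ n, a n * b n
      - (w₁ * μhat ^ 2 + w₂ * μhat' ^ 2 + w₃ * (μhat * μhat')))
    (hVtilde : Vtilde = ((N : ℝ) / ((N : ℝ) - w₃)) * (V + (w₁ * s2 + w₂ * s2') / (N : ℝ)))
    (hfbar : ∀ k, fbar k = (a k + b k) / 2)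
    (hfgrand : fgrand = (2 * (N : ℝ))⁻¹ * ∑ k, (a k + b k))
    (hSSτ : SSτ = ∑ k, 2 * (fbar k - fgrand) ^ 2)
    (hSSε : SSε = ∑ k, ((a k - fbar k) ^ 2 + (b k - fbar k) ^ 2)) :
    Vtilde = (SSτ - (((N : ℝ) - 1) / (N : ℝ)) * SSε) / (2 * (N : ℝ) - 2) := by
  have hN' : (2 : ℝ) ≤ N := by exact_mod_cast hN
  have hvar (x : Fin N → ℝ) :
      ∑ n, (x n - (N : ℝ)⁻¹ * ∑ m, x m) ^ 2 = ∑ n, x n ^ 2 - (N : ℝ)⁻¹ * (∑ n, x n) ^ 2 := by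
    simpa using sum_sq_sub_mean univ x
  have hSSτ' := sum_two_mul_sq_pair_mean_sub_grand_mean univ a b
  have hSSε' := sum_sq_sub_pair_mean univ a b
  simp only [card_univ, Fintype.card_fin] at hSSτ'
  simp only [hfbar] at hSSτ hSSε
  have h1 : (N : ℝ) - 1 ≠ 0 := by linarith
  have h2 : 2 * (N : ℝ) - 1 ≠ 0 := by linarith
  have h3 : 2 * (N : ℝ) - 2 ≠ 0 := by linarith
  have hratio : (N : ℝ) / (N - w₃) = (2 * N - 1) / (2 * N - 2) := by
    have hsub : (N : ℝ) - w₃ = N * (2 * N - 2) / (2 * N - 1) := by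
      rw [hw₃, eq_div_iff h2, sub_mul, div_mul_cancel₀ _ h2]; ring
    rw [hsub]; field_simp
  rw [hVtilde, hratio, hV, hs2, hs2', hμhat, hμhat', hvar, hvar, hSSτ, hfgrand, hSSτ', hSSε,
    hSSε', hw₁, hw₂, hw₃]
  field_simp
  ring
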